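/- Under the hypotheses of the previous coercivity identity, suppose additionally that S* is positive definite on Z and that B + γS is positive definite on U (i.e., B(u,u) + γS(u,u) = 0 implies u = 0). Then the only solution of 𝒜[(u,z),(v,w)] = 0 for all (v,w) ∈ U × Z is (u,z) = (0,0), and consequently for every linear functional ℓ on U × Z there is a unique (u_h,z_h) with 𝒜[(u_h,z_h),(v,w)] = ℓ(v,w) for all (v,w). -/

import Mathlib

/-!
Testing the form against `(u, -z)` cancels the coupling terms `a u z` and leaves
`C u u + D z z` with `C = B + γ S` and `D = γ* S*`; both summands are nonnegative, so a
vector in the left kernel has `C u u = 0 = D z z`, and definiteness forces `(u, z) = 0`.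
A bilinear form on a finite-dimensional space with trivial left kernel is an isomorphism onto
the dual, which gives unique solvability.
-/

namespace LinearMap

theorem SeparatingLeft.bijective {K V : Type*} [Field K] [AddCommGroup V] [Module K V]
    [FiniteDimensional K V] {A : V →ₗ[K] V →ₗ[K] K} (hA : A.SeparatingLeft) :
    Function.Bijective A := by
  have hinj : Function.Injective A := by
    rw [← ker_eq_bot, ← separatingLeft_iff_ker_eq_bot]
    exact hA
  exact ⟨hinj, (injective_iff_surjective_of_finrank_eq_finrank
    Subspace.dual_finrank_eq.symm).mp hinj⟩

end LinearMap

section SaddleForm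

variable {R U Z : Type*} [CommRing R] [AddCommGroup U] [Module R U] [AddCommGroup Z] [Module R Z]

def saddleForm (C : U →ₗ[R] U →ₗ[R] R) (a : U →ₗ[R] Z →ₗ[R] R) (D : Z →ₗ[R] Z →ₗ[R] R) :
    U × Z →ₗ[R] U × Z →ₗ[R] R :=
  C.compl₁₂ (.fst R U Z) (.fst R U Z) + a.flip.compl₁₂ (.snd R U Z) (.fst R U Z) +
    a.compl₁₂ (.fst R U Z) (.snd R U Z) - D.compl₁₂ (.snd R U Z) (.snd R U Z)

variable (C : U →ₗ[R] U →ₗ[R] R) (a : U →ₗ[R] Z →ₗ[R] R) (D : Z →ₗ[R] Z →ₗ[R] R)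

@[simp]
theorem saddleForm_apply (p q : U × Z) :
    saddleForm C a D p q = C p.1 q.1 + a q.1 p.2 + a p.1 q.2 - D p.2 q.2 := by
  simp [saddleForm]

theorem saddleForm_apply_neg_snd (u : U) (z : Z) :
    saddleForm C a D (u, z) (u, -z) = C u u + D z z := by
  simp only [saddleForm_apply, map_neg]
  ring

end SaddleForm

theorem saddleForm_separatingLeft {R U Z : Type*} [CommRing R] [PartialOrder R]
    [IsOrderedAddMonoid R] [AddCommGroup U] [Module R U] [AddCommGroup Z] [Module R Z]
    {C : U →ₗ[R] U →ₗ[R] R} {D : Z →ₗ[R] Z →ₗ[R] R} (a : U →ₗ[R] Z →ₗ[R] R)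
    (hC : ∀ u, 0 ≤ C u u) (hC₀ : ∀ u, C u u = 0 → u = 0)
    (hD : ∀ z, 0 ≤ D z z) (hD₀ : ∀ z, D z z = 0 → z = 0) :
    (saddleForm C a D).SeparatingLeft := by
  rintro ⟨u, z⟩ h
  have hsum : C u u + D z z = 0 := by
    rw [← saddleForm_apply_neg_snd C a D]
    exact h (u, -z)
  obtain ⟨hu, hz⟩ := (add_eq_zero_iff_of_nonneg (hC u) (hD z)).mp hsum
  simp [hC₀ u hu, hD₀ z hz]

theorem stmt6_general (U Z : Type*) [AddCommGroup U] [Module ℝ U] [AddCommGroup Z] [Module ℝ Z]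
    [FiniteDimensional ℝ U] [FiniteDimensional ℝ Z]
    (B S : U →ₗ[ℝ] U →ₗ[ℝ] ℝ) (S' : Z →ₗ[ℝ] Z →ₗ[ℝ] ℝ)
    (a : U →ₗ[ℝ] Z →ₗ[ℝ] ℝ)
    (hBpos : ∀ u, 0 ≤ B u u) (hSpos : ∀ u, 0 ≤ S u u) (hS'pos : ∀ z, 0 ≤ S' z z)
    (γ γ' : ℝ) (hγ : 0 < γ) (hγ' : 0 < γ')
    (hS'def : ∀ z, S' z z = 0 → z = 0)
    (hBSdef : ∀ u, B u u + γ * S u u = 0 → u = 0)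
    (𝒜 : U × Z → U × Z → ℝ)
    (h𝒜 : ∀ u z v w, 𝒜 (u, z) (v, w) =
      B u v + γ * S u v + a v z + a u w - γ' * S' z w) :
    (∀ u z, (∀ v w, 𝒜 (u, z) (v, w) = 0) → u = 0 ∧ z = 0) ∧
    (∀ ℓ : U × Z →ₗ[ℝ] ℝ, ∃! p : U × Z, ∀ v w, 𝒜 p (v, w) = ℓ (v, w)) := by
  set A := saddleForm (B + γ • S) a (γ' • S')
  have h𝒜A : ∀ p v w, 𝒜 p (v, w) = A p (v, w) := by
    rintro ⟨u, z⟩ v w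
    simp [A, h𝒜, add_assoc]
  have hA : A.SeparatingLeft := saddleForm_separatingLeft a
    (fun u => by simpa using add_nonneg (hBpos u) (mul_nonneg hγ.le (hSpos u)))
    (fun u hu => hBSdef u (by simpa using hu))
    (fun z => by simpa using mul_nonneg hγ'.le (hS'pos z))
    (fun z hz => hS'def z (by simpa [hγ'.ne'] using hz))
  refine ⟨fun u z h => ?_, fun ℓ => ?_⟩
  · exact Prod.ext_iff.mp (hA (u, z) fun q => by simpa [h𝒜A] using h q.1 q.2)
  · simp only [h𝒜A]
    simpa only [LinearMap.ext_iff, Prod.forall] using hA.bijective.existsUnique ℓ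

theorem stmt6 (U Z : Type*) [AddCommGroup U] [Module ℝ U] [AddCommGroup Z] [Module ℝ Z]
    [FiniteDimensional ℝ U] [FiniteDimensional ℝ Z]
    (B S : U →ₗ[ℝ] U →ₗ[ℝ] ℝ) (S' : Z →ₗ[ℝ] Z →ₗ[ℝ] ℝ)
    (a : U →ₗ[ℝ] Z →ₗ[ℝ] ℝ)
    (hBsymm : ∀ u v, B u v = B v u) (hBpos : ∀ u, 0 ≤ B u u)
    (hSsymm : ∀ u v, S u v = S v u) (hSpos : ∀ u, 0 ≤ S u u)
    (hS'symm : ∀ z w, S' z w = S' w z) (hS'pos : ∀ z, 0 ≤ S' z z)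
    (γ γ' : ℝ) (hγ : 0 < γ) (hγ' : 0 < γ')
    (hS'def : ∀ z, S' z z = 0 → z = 0)
    (hBSdef : ∀ u, B u u + γ * S u u = 0 → u = 0)
    (𝒜 : U × Z → U × Z → ℝ)
    (h𝒜 : ∀ u z v w, 𝒜 (u, z) (v, w) =
      B u v + γ * S u v + a v z + a u w - γ' * S' z w) :
    (∀ u z, (∀ v w, 𝒜 (u, z) (v, w) = 0) → u = 0 ∧ z = 0) ∧
    (∀ ℓ : U × Z →ₗ[ℝ] ℝ, ∃! p : U × Z, ∀ v w, 𝒜 p (v, w) = ℓ (v, w)) :=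
  stmt6_general U Z B S S' a hBpos hSpos hS'pos γ γ' hγ hγ' hS'def hBSdef 𝒜 h𝒜
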